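/- Let (i_1, …, i_n) be a reduced word, and let π be a path such that Θ_{k−1} is α_{i_k}-integral for each 1 ≤ k ≤ n. Set β_n^∨ = w(n−1)(α_{i_n}^∨). Then Υ'_{n−1}(π)(0) − Υ'_n(π)(0) = ε_{α_{i_n}}(Θ_{n−1}) · β_n^∨, where ε_{α_{i_n}}(Θ_{n−1}) = −min α_{i_n}∘Θ_{n−1}. -/

import Mathlib

open Set

namespace MVPaper

variable {V : Type*} [AddCommGroup V] [Module ℝ V]

/-- `π` is piecewise linear (affine) on `[0,1]`. -/
def IsPWLinearOn (π : ℝ → V) : Prop :=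
  ∃ (n : ℕ) (t : Fin (n + 1) → ℝ), Monotone t ∧ t 0 = 0 ∧ t (Fin.last n) = 1 ∧
    ∀ i : Fin n, ∃ a b : V, ∀ s ∈ Set.Icc (t i.castSucc) (t i.succ), π s = s • a + b

/-- A path: continuous piecewise linear with `π 0 = 0`. -/
def IsPath (π : ℝ → V) : Prop := π 0 = 0 ∧ IsPWLinearOn π

/-- `t ∈ (0,1)` is a local minimum point of `f`. -/
def IsLocalMinPt (f : ℝ → ℝ) (t : ℝ) : Prop :=
  t ∈ Set.Ioo (0 : ℝ) 1 ∧ ∀ᶠ s in nhds t, f t ≤ f s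

/-- `f` takes integer values at `0`, `1` and at local minimum points. -/
def IsIntegralFn (f : ℝ → ℝ) : Prop :=
  (∃ m : ℤ, f 0 = m) ∧ (∃ m : ℤ, f 1 = m) ∧ ∀ t, IsLocalMinPt f t → ∃ m : ℤ, f t = m

def IsZeroSectionAt (f : ℝ → ℝ) (m a b : ℝ) : Prop :=
  0 ≤ a ∧ a < b ∧ b ≤ 1 ∧ ∀ t ∈ Set.Icc a b, f t = m

def IsPreStableAt (f : ℝ → ℝ) (m a b : ℝ) : Prop :=
  0 ≤ a ∧ a < b ∧ b ≤ 1 ∧ f a = m ∧ f b = m ∧ ∀ t ∈ Set.Ioo a b, m < f t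

/-- A stable section: maximal among intervals on which `f` equals `m` at the ends and is
`> m` inside, for some integer level. -/
def IsStableSectionAt (f : ℝ → ℝ) (m a b : ℝ) : Prop :=
  IsPreStableAt f m a b ∧
    ∀ (m' : ℤ) (a' b' : ℝ), IsPreStableAt f (m' : ℝ) a' b' → a' ≤ a → b ≤ b' →
      a' = a ∧ b' = b

def IsPosDirectedSectionAt (f : ℝ → ℝ) (m a b : ℝ) : Prop :=
  0 ≤ a ∧ a < b ∧ b ≤ 1 ∧ f a = m ∧ f b = m + 1 ∧
    ∀ t ∈ Set.Ioo a b, m < f t ∧ f t < m + 1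

def IsNegDirectedSectionAt (f : ℝ → ℝ) (m a b : ℝ) : Prop :=
  0 ≤ a ∧ a < b ∧ b ≤ 1 ∧ f a = m ∧ f b = m - 1 ∧
    ∀ t ∈ Set.Ioo a b, m - 1 < f t ∧ f t < m

def IsSectionAt (f : ℝ → ℝ) (a b : ℝ) : Prop :=
  ∃ m : ℤ, IsZeroSectionAt f (m : ℝ) a b ∨ IsStableSectionAt f (m : ℝ) a b ∨
    IsPosDirectedSectionAt f (m : ℝ) a b ∨ IsNegDirectedSectionAt f (m : ℝ) a b

/-- `a` and `b` are consecutive elements of the finite set `T`. -/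
def Adjacent (T : Finset ℝ) (a b : ℝ) : Prop :=
  a ∈ T ∧ b ∈ T ∧ a < b ∧ ∀ c ∈ T, c ≤ a ∨ b ≤ c

/-- `T` is a subdivision of `[0,1]` each of whose consecutive intervals is a section of `f`. -/
def IsSectionDecomposition (f : ℝ → ℝ) (T : Finset ℝ) : Prop :=
  (0 : ℝ) ∈ T ∧ (1 : ℝ) ∈ T ∧ (T : Set ℝ) ⊆ Set.Icc 0 1 ∧
    ∀ a b : ℝ, Adjacent T a b → IsSectionAt f a b

def NoTwoConsecutiveZeroSections (f : ℝ → ℝ) (T : Finset ℝ) : Prop :=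
  ∀ a b c : ℝ, Adjacent T a b → Adjacent T b c →
    ¬ ((∃ m : ℤ, IsZeroSectionAt f (m : ℝ) a b) ∧ (∃ m : ℤ, IsZeroSectionAt f (m : ℝ) b c))

/-- `Q_β(π) = min β∘π` on `[0,1]`. -/
noncomputable def Qval (β : V →ₗ[ℝ] ℝ) (π : ℝ → V) : ℝ :=
  sInf ((fun t => β (π t)) '' Set.Icc (0 : ℝ) 1)

/-- The reflection `s_β(v) = v - β(v)β^∨`. -/
def sRefl (β : V →ₗ[ℝ] ℝ) (βv : V) (v : V) : V := v - β v • βv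

/-- `q`, the first time the minimum of `β∘π` is attained. -/
noncomputable def qTime (β : V →ₗ[ℝ] ℝ) (π : ℝ → V) : ℝ :=
  sInf {t | t ∈ Set.Icc (0 : ℝ) 1 ∧ β (π t) = Qval β π}

/-- `y`, the last time before `q` where `β∘π = Q+1`. -/
noncomputable def yTime (β : V →ₗ[ℝ] ℝ) (π : ℝ → V) : ℝ :=
  sSup {t | t ∈ Set.Icc (0 : ℝ) 1 ∧ t < qTime β π ∧ β (π t) = Qval β π + 1}

/-- Littelmann raising operator. -/
noncomputable def eOp (β : V →ₗ[ℝ] ℝ) (βv : V) (π : ℝ → V) : ℝ → V := fun t =>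
  if t ≤ yTime β π then π t
  else if t ≤ qTime β π then π (yTime β π) + sRefl β βv (π t - π (yTime β π))
  else π t + βv

/-- `p`, the last time the minimum of `β∘π` is attained. -/
noncomputable def pTime (β : V →ₗ[ℝ] ℝ) (π : ℝ → V) : ℝ :=
  sSup {t | t ∈ Set.Icc (0 : ℝ) 1 ∧ β (π t) = Qval β π}

/-- `x`, the first time after `p` where `β∘π = Q+1`. -/
noncomputable def xTime (β : V →ₗ[ℝ] ℝ) (π : ℝ → V) : ℝ :=
  sInf {t | t ∈ Set.Icc (0 : ℝ) 1 ∧ pTime β π < t ∧ β (π t) = Qval β π + 1}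

/-- Littelmann lowering operator. -/
noncomputable def fOp (β : V →ₗ[ℝ] ℝ) (βv : V) (π : ℝ → V) : ℝ → V := fun t =>
  if t ≤ pTime β π then π t
  else if t ≤ xTime β π then π (pTime β π) + sRefl β βv (π t - π (pTime β π))
  else π t - βv

noncomputable def phiVal (β : V →ₗ[ℝ] ℝ) (π : ℝ → V) : ℝ := β (π 1) - Qval β π

/-- `e_β^{max}`: iterate `e_β` while `Q_β ≤ -1`, i.e. `ε_β(π)` many times. -/
noncomputable def eMax (β : V →ₗ[ℝ] ℝ) (βv : V) (π : ℝ → V) : ℝ → V :=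
  (eOp β βv)^[⌊-(Qval β π)⌋₊] π

/-- `f_β^{max}`: iterate `f_β` while `φ_β ≥ 1`, i.e. `φ_β(π)` many times. -/
noncomputable def fMax (β : V →ₗ[ℝ] ℝ) (βv : V) (π : ℝ → V) : ℝ → V :=
  (fOp β βv)^[⌊phiVal β π⌋₊] π


variable {I : Type*}

/-- A root generating system for a generalized Cartan matrix. -/
def IsRootGenSystem (α : I → (V →ₗ[ℝ] ℝ)) (αv : I → V) : Prop :=
  LinearIndependent ℝ α ∧ LinearIndependent ℝ αv ∧
  (∀ i, α i (αv i) = 2) ∧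
  (∀ i j, i ≠ j → ∃ n : ℤ, n ≤ 0 ∧ α j (αv i) = (n : ℝ)) ∧
  (∀ i j, α j (αv i) = 0 ↔ α i (αv j) = 0)

/-- The simple reflection `s_i`. -/
def si (α : I → (V →ₗ[ℝ] ℝ)) (αv : I → V) (i : I) : V → V :=
  fun v => v - α i v • αv i

/-- The product `s_{i_1} ∘ ⋯ ∘ s_{i_n}` associated to a word `[i_1, …, i_n]`. -/
def wProd (α : I → (V →ₗ[ℝ] ℝ)) (αv : I → V) (c : List I) : V → V :=
  c.foldr (fun i g => (si α αv i) ∘ g) id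

/-- A word is reduced if its Weyl group element cannot be written with fewer generators. -/
def IsReducedWord (α : I → (V →ₗ[ℝ] ℝ)) (αv : I → V) (c : List I) : Prop :=
  ∀ c' : List I, wProd α αv c' = wProd α αv c → c.length ≤ c'.length

/-- `Θ` for the word `[i_1, …, i_k]`: `f_{α_{i_k}}^{max} ⋯ f_{α_{i_1}}^{max} (π)`. -/
noncomputable def ThetaPath (α : I → (V →ₗ[ℝ] ℝ)) (αv : I → V) (c : List I) (π : ℝ → V) :
    ℝ → V :=
  c.foldl (fun σ i => fMax (α i) (αv i) σ) π

/-- Each `Θ_{k-1}` is `α_{i_k}`-integral. -/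
def ThetaIntegral (α : I → (V →ₗ[ℝ] ℝ)) (αv : I → V) (c : List I) (π : ℝ → V) : Prop :=
  ∀ k : Fin c.length,
    IsIntegralFn (fun t => α (c.get k) (ThetaPath α αv (c.take k) π t))

/-- `Υ_w(π) = w ∘ f_w^{max}(π)`. -/
noncomputable def UpsPath (α : I → (V →ₗ[ℝ] ℝ)) (αv : I → V) (c : List I) (π : ℝ → V) :
    ℝ → V :=
  fun t => wProd α αv c (ThetaPath α αv c π t)

/-- `Υ'_w(π)`, the translate of `Υ_w(π)` ending at `π(1)`. -/
noncomputable def UpsPath' (α : I → (V →ₗ[ℝ] ℝ)) (αv : I → V) (c : List I) (π : ℝ → V) :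
    ℝ → V :=
  fun t => UpsPath α αv c π t + (π 1 - UpsPath α αv c π 1)

/-!
Since every `Θ` starts at `π 0 = 0`, `Υ'_c(π)(0) = π(1) - w_c(Θ_c(1))`, so only endpoints matter.
For a `β`-integral path `σ` with `φ_β(σ) ≥ 1`, one step of `f_β` reflects the stretch between
the last minimum `p` and the first later time `x` at level `Q + 1`, and shifts the rest by
`-β^∨`. Integrality keeps `β ∘ σ ≥ Q + 1` after `x` (its minima there are integers above `Q`),
so the step lowers `Q_β` by exactly one, moves the endpoint by `-β^∨`, and stays integral and
continuous. Iterating `φ_β(σ)` times gives `f_β^{max}(σ)(1) = σ(1) - φ_β(σ) β^∨`, and then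
`s_β(σ(1) - φ_β(σ) β^∨) = σ(1) - Q_β(σ) β^∨`; applying `w` yields the difference
`-Q_β(Θ_{n-1}) w(β^∨)`.
-/

open Filter Topology

/-- `V` carries no topology, so continuity of a path is tested against every linear form
(in finite dimension this is ordinary continuity). -/
def WeaklyContinuousOn (σ : ℝ → V) (s : Set ℝ) : Prop :=
  ∀ γ : V →ₗ[ℝ] ℝ, ContinuousOn (fun t => γ (σ t)) s

theorem continuousOn_Icc_of_forall_continuousOn_Icc {X : Type*} [TopologicalSpace X]
    {f : ℝ → X} : ∀ {n : ℕ} {t : Fin (n + 1) → ℝ}, Monotone t →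
      (∀ i : Fin n, ContinuousOn f (Icc (t i.castSucc) (t i.succ))) →
      ContinuousOn f (Icc (t 0) (t (Fin.last n)))
  | 0, t, _, _ => by simp
  | n + 1, t, ht, hpieces => by
    have hinit : ContinuousOn f (Icc (t 0) (t (Fin.last n).castSucc)) :=
      continuousOn_Icc_of_forall_continuousOn_Icc (t := fun i => t i.castSucc)
        (ht.comp Fin.strictMono_castSucc.monotone)
        (fun i => by simpa only [Fin.succ_castSucc] using hpieces i.castSucc)
    have hunion := hinit.union_of_isClosed (hpieces (Fin.last n)) isClosed_Icc isClosed_Icc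
    rwa [Icc_union_Icc_eq_Icc (ht (Fin.zero_le _)) (ht (Fin.castSucc_le_succ _)),
      Fin.succ_last] at hunion

theorem IsPWLinearOn.weaklyContinuousOn {π : ℝ → V} (hπ : IsPWLinearOn π) :
    WeaklyContinuousOn π (Icc 0 1) := by
  obtain ⟨n, t, ht, ht0, ht1, hpieces⟩ := hπ
  intro γ
  rw [← ht0, ← ht1]
  refine continuousOn_Icc_of_forall_continuousOn_Icc ht fun i => ?_
  obtain ⟨a, b, hab⟩ := hpieces i
  refine (show Continuous fun s : ℝ => s * γ a + γ b by fun_prop).continuousOn.congr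
    fun s hs => ?_
  simp only [hab s hs, map_add, map_smul, smul_eq_mul]

theorem exists_isLocalMin_of_isLocalMax {f : ℝ → ℝ} {a b : ℝ} (hab : a < b)
    (hf : ContinuousOn f (Icc a b)) (hmax : IsLocalMax f a) (hlt : f a < f b) :
    ∃ s ∈ Ioo a b, IsLocalMin f s ∧ f s ≤ f a := by
  obtain ⟨s, hs, hmin⟩ : ∃ s ∈ Ioo a b, IsMinOn f (Icc a b) s := by
    obtain ⟨s, hs, hmin⟩ := isCompact_Icc.exists_isMinOn (nonempty_Icc.2 hab.le) hf
    rcases eq_or_lt_of_le hs.1 with rfl | has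
    · -- the local maximum at `s` forces `f` to stay at its minimum just to the right of `s`
      obtain ⟨u, hfu, hu⟩ := ((hmax.filter_mono nhdsWithin_le_nhds).and
        (Ioo_mem_nhdsGT hab)).exists
      exact ⟨u, hu, fun v hv => hfu.trans (hmin hv)⟩
    · refine ⟨s, ⟨has, lt_of_le_of_ne hs.2 ?_⟩, hmin⟩
      rintro rfl
      exact (hmin (left_mem_Icc.2 hab.le)).not_gt hlt
  exact ⟨s, hs, hmin.isLocalMin (Icc_mem_nhds hs.1 hs.2), hmin (left_mem_Icc.2 hab.le)⟩

namespace IsIntegralFn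

variable {f : ℝ → ℝ}

theorem add_one_le_of_isLocalMin (hf : IsIntegralFn f) {s : ℝ} (hs : s ∈ Ioo 0 1)
    (hmin : IsLocalMin f s) {k : ℤ} (hk : k < f s) : k + 1 ≤ f s := by
  obtain ⟨m, hm⟩ := hf.2.2 s ⟨hs, hmin⟩
  rw [hm] at hk ⊢
  exact_mod_cast (Int.cast_lt.1 hk : k < m)

theorem exists_eq_intCast_of_isMinOn (hf : IsIntegralFn f) {s : ℝ} (hs : s ∈ Icc 0 1)
    (hmin : IsMinOn f (Icc 0 1) s) : ∃ m : ℤ, f s = m := by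
  rcases eq_or_lt_of_le hs.1 with rfl | h0
  · exact hf.1
  rcases eq_or_lt_of_le hs.2 with rfl | h1
  · exact hf.2.1
  exact hf.2.2 s ⟨⟨h0, h1⟩, hmin.isLocalMin (Icc_mem_nhds h0 h1)⟩

/-- The minimum on `[a, 1]` is attained at an end or at an integral local minimum. -/
theorem add_one_le_of_forall_lt (hf : IsIntegralFn f) {a : ℝ} (ha : 0 ≤ a)
    (hcont : ContinuousOn f (Icc a 1)) {k : ℤ} (hk : ∀ t ∈ Icc a 1, (k : ℝ) < f t)
    (ha' : k + 1 ≤ f a) (h1 : k + 1 ≤ f 1) {t : ℝ} (ht : t ∈ Icc a 1) : k + 1 ≤ f t := by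
  obtain ⟨s, hs, hmin⟩ := isCompact_Icc.exists_isMinOn (nonempty_Icc.2 (ht.1.trans ht.2)) hcont
  refine le_trans ?_ (hmin ht)
  rcases eq_or_lt_of_le hs.1 with rfl | has
  · exact ha'
  rcases eq_or_lt_of_le hs.2 with rfl | hs1
  · exact h1
  exact hf.add_one_le_of_isLocalMin ⟨ha.trans_lt has, hs1⟩
    (hmin.isLocalMin (Icc_mem_nhds has hs1)) (hk s hs)

end IsIntegralFn

section Lowering

variable {β : V →ₗ[ℝ] ℝ} {βv : V} {σ : ℝ → V}

theorem Qval_le (hf : ContinuousOn (fun t => β (σ t)) (Icc 0 1)) {t : ℝ} (ht : t ∈ Icc 0 1) :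
    Qval β σ ≤ β (σ t) :=
  csInf_le (isCompact_Icc.image_of_continuousOn hf).bddBelow (mem_image_of_mem _ ht)

theorem isMinOn_iff_eq_Qval (hf : ContinuousOn (fun t => β (σ t)) (Icc 0 1)) {t : ℝ}
    (ht : t ∈ Icc 0 1) : IsMinOn (fun t => β (σ t)) (Icc 0 1) t ↔ β (σ t) = Qval β σ :=
  ⟨fun hmin => le_antisymm (le_csInf ((nonempty_Icc.2 zero_le_one).image _)
      (forall_mem_image.2 fun _ hs => hmin hs)) (Qval_le hf ht),
    fun heq s hs => show β (σ t) ≤ β (σ s) from heq ▸ Qval_le hf hs⟩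

theorem exists_eq_Qval (hf : ContinuousOn (fun t => β (σ t)) (Icc 0 1)) :
    ∃ t ∈ Icc (0 : ℝ) 1, β (σ t) = Qval β σ := by
  obtain ⟨t, ht, hmin⟩ := isCompact_Icc.exists_isMinOn (nonempty_Icc.2 zero_le_one) hf
  exact ⟨t, ht, (isMinOn_iff_eq_Qval hf ht).1 hmin⟩

theorem exists_Qval_eq_intCast (hf : ContinuousOn (fun t => β (σ t)) (Icc 0 1))
    (hI : IsIntegralFn (fun t => β (σ t))) : ∃ m : ℤ, Qval β σ = m := by
  obtain ⟨t, ht, hmin⟩ := isCompact_Icc.exists_isMinOn (nonempty_Icc.2 zero_le_one) hf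
  rw [← (isMinOn_iff_eq_Qval hf ht).1 hmin]
  exact hI.exists_eq_intCast_of_isMinOn ht hmin

theorem pTime_mem (hf : ContinuousOn (fun t => β (σ t)) (Icc 0 1)) :
    pTime β σ ∈ Icc (0 : ℝ) 1 ∧ β (σ (pTime β σ)) = Qval β σ :=
  (hf.preimage_isClosed_of_isClosed isClosed_Icc isClosed_singleton).csSup_mem
    (exists_eq_Qval hf) ⟨1, fun _ ht => ht.1.2⟩

theorem Qval_lt_of_pTime_lt (hf : ContinuousOn (fun t => β (σ t)) (Icc 0 1)) {t : ℝ}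
    (ht : t ∈ Icc 0 1) (hpt : pTime β σ < t) : Qval β σ < β (σ t) :=
  (Qval_le hf ht).lt_of_ne fun heq =>
    hpt.not_ge (le_csSup ⟨1, fun _ hs => hs.1.2⟩ ⟨ht, heq.symm⟩)

theorem xTime_mem (hf : ContinuousOn (fun t => β (σ t)) (Icc 0 1))
    (hφ : Qval β σ + 1 ≤ β (σ 1)) :
    pTime β σ < xTime β σ ∧ xTime β σ ≤ 1 ∧ β (σ (xTime β σ)) = Qval β σ + 1 := by
  obtain ⟨hp, hfp⟩ := pTime_mem hf
  set S := {t | t ∈ Icc (0 : ℝ) 1 ∧ pTime β σ < t ∧ β (σ t) = Qval β σ + 1}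
  have hS : S = Icc (pTime β σ) 1 ∩ (fun t => β (σ t)) ⁻¹' {Qval β σ + 1} := by
    ext t
    refine ⟨fun ht => ⟨⟨ht.2.1.le, ht.1.2⟩, ht.2.2⟩, fun ht => ⟨⟨hp.1.trans ht.1.1, ht.1.2⟩,
      ht.1.1.lt_of_ne ?_, ht.2⟩⟩
    rintro rfl
    linarith [ht.2.symm.trans hfp]
  have hsub : Icc (pTime β σ) 1 ⊆ Icc 0 1 := Icc_subset_Icc_left hp.1
  have hne : S.Nonempty := by
    rw [hS]
    exact intermediate_value_Icc hp.2 (hf.mono hsub) ⟨by linarith, hφ⟩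
  have hmem : xTime β σ ∈ S := by
    refine IsClosed.csInf_mem ?_ hne ⟨0, fun _ ht => ht.1.1⟩
    rw [hS]
    exact (hf.mono hsub).preimage_isClosed_of_isClosed isClosed_Icc isClosed_singleton
  exact ⟨hmem.2.1, hmem.1.2, hmem.2.2⟩

theorem lt_Qval_add_one_of_lt_xTime (hf : ContinuousOn (fun t => β (σ t)) (Icc 0 1))
    (hφ : Qval β σ + 1 ≤ β (σ 1)) {t : ℝ} (hpt : pTime β σ < t) (htx : t < xTime β σ) :
    β (σ t) < Qval β σ + 1 := by
  by_contra! hge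
  obtain ⟨hp, hfp⟩ := pTime_mem hf
  have ht1 : t ≤ 1 := htx.le.trans (xTime_mem hf hφ).2.1
  obtain ⟨s, hs, hfs⟩ := intermediate_value_Icc hpt.le
    (hf.mono (Icc_subset_Icc hp.1 ht1)) ⟨by linarith, hge⟩
  have hps : pTime β σ < s := hs.1.lt_of_ne fun h => by
    subst h
    linarith [hfs.symm.trans hfp]
  have hxs : xTime β σ ≤ s :=
    csInf_le ⟨0, fun _ hu => hu.1.1⟩ ⟨⟨hp.1.trans hs.1, hs.2.trans ht1⟩, hps, hfs⟩
  linarith [hs.2]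

theorem Qval_add_one_le_of_xTime_le (hf : ContinuousOn (fun t => β (σ t)) (Icc 0 1))
    (hI : IsIntegralFn (fun t => β (σ t))) (hφ : Qval β σ + 1 ≤ β (σ 1)) {t : ℝ}
    (ht : t ∈ Icc (xTime β σ) 1) : Qval β σ + 1 ≤ β (σ t) := by
  obtain ⟨hpx, hx1, hfx⟩ := xTime_mem hf hφ
  have hx0 : 0 ≤ xTime β σ := (pTime_mem hf).1.1.trans hpx.le
  obtain ⟨k, hk⟩ := exists_Qval_eq_intCast hf hI
  rw [hk] at hφ hfx ⊢
  refine hI.add_one_le_of_forall_lt hx0 (hf.mono (Icc_subset_Icc_left hx0)) (fun s hs => ?_)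
    hfx.ge hφ ht
  rw [← hk]
  exact Qval_lt_of_pTime_lt hf ⟨hx0.trans hs.1, hs.2⟩ (hpx.trans_le hs.1)

theorem fOp_of_le_pTime {t : ℝ} (ht : t ≤ pTime β σ) : fOp β βv σ t = σ t := by
  simp only [fOp, if_pos ht]

theorem fOp_of_mem_Icc (hf : ContinuousOn (fun t => β (σ t)) (Icc 0 1)) {t : ℝ}
    (ht : t ∈ Icc (pTime β σ) (xTime β σ)) :
    fOp β βv σ t = σ t - (β (σ t) - Qval β σ) • βv := by
  have hfp := (pTime_mem hf).2
  rcases eq_or_lt_of_le ht.1 with rfl | hpt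
  · rw [fOp_of_le_pTime le_rfl, hfp, sub_self, zero_smul, sub_zero]
  · simp only [fOp, if_neg hpt.not_ge, if_pos ht.2, sRefl, map_sub, hfp]
    abel

theorem fOp_of_xTime_le (hf : ContinuousOn (fun t => β (σ t)) (Icc 0 1))
    (hφ : Qval β σ + 1 ≤ β (σ 1)) {t : ℝ} (ht : xTime β σ ≤ t) :
    fOp β βv σ t = σ t - βv := by
  obtain ⟨hpx, -, hfx⟩ := xTime_mem hf hφ
  rcases eq_or_lt_of_le ht with rfl | hxt
  · rw [fOp_of_mem_Icc hf ⟨hpx.le, le_rfl⟩, hfx, add_sub_cancel_left, one_smul]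
  · simp only [fOp, if_neg (hpx.trans hxt).not_ge, if_neg hxt.not_ge]

theorem fOp_apply_zero : fOp β βv σ 0 = σ 0 :=
  fOp_of_le_pTime (Real.sSup_nonneg fun _ ht => ht.1.1)

theorem fOp_apply_one (hf : ContinuousOn (fun t => β (σ t)) (Icc 0 1))
    (hφ : Qval β σ + 1 ≤ β (σ 1)) : fOp β βv σ 1 = σ 1 - βv :=
  fOp_of_xTime_le hf hφ (xTime_mem hf hφ).2.1

theorem continuousOn_fOp {γ : V →ₗ[ℝ] ℝ} (hf : ContinuousOn (fun t => β (σ t)) (Icc 0 1))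
    (hγ : ContinuousOn (fun t => γ (σ t)) (Icc 0 1)) (hφ : Qval β σ + 1 ≤ β (σ 1)) :
    ContinuousOn (fun t => γ (fOp β βv σ t)) (Icc 0 1) := by
  obtain ⟨hp, -⟩ := pTime_mem hf
  obtain ⟨hpx, hx1, -⟩ := xTime_mem hf hφ
  have hx0 : 0 ≤ xTime β σ := hp.1.trans hpx.le
  have hbefore : ContinuousOn (fun t => γ (fOp β βv σ t)) (Icc 0 (pTime β σ)) :=
    (hγ.mono (Icc_subset_Icc_right hp.2)).congr fun t ht => by
      simp only [fOp_of_le_pTime ht.2]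
  have hmiddle : ContinuousOn (fun t => γ (fOp β βv σ t)) (Icc (pTime β σ) (xTime β σ)) :=
    ((hγ.sub ((hf.sub (continuousOn_const (c := Qval β σ))).mul
      (continuousOn_const (c := γ βv)))).mono (Icc_subset_Icc hp.1 hx1)).congr fun t ht => by
      simp only [fOp_of_mem_Icc hf ht, map_sub, map_smul, smul_eq_mul, Pi.sub_apply,
        Pi.mul_apply]
  have hafter : ContinuousOn (fun t => γ (fOp β βv σ t)) (Icc (xTime β σ) 1) :=
    ((hγ.sub (continuousOn_const (c := γ βv))).mono (Icc_subset_Icc_left hx0)).congr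
      fun t ht => by simp only [fOp_of_xTime_le hf hφ ht.1, map_sub, Pi.sub_apply]
  have h := hbefore.union_of_isClosed hmiddle isClosed_Icc isClosed_Icc
  rw [Icc_union_Icc_eq_Icc hp.1 hpx.le] at h
  have h := h.union_of_isClosed hafter isClosed_Icc isClosed_Icc
  rwa [Icc_union_Icc_eq_Icc hx0 hx1] at h

theorem apply_fOp_of_mem_Icc (hf : ContinuousOn (fun t => β (σ t)) (Icc 0 1)) (h2 : β βv = 2)
    {t : ℝ} (ht : t ∈ Icc (pTime β σ) (xTime β σ)) :
    β (fOp β βv σ t) = 2 * Qval β σ - β (σ t) := by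
  rw [fOp_of_mem_Icc hf ht, map_sub, map_smul, smul_eq_mul, h2]
  ring

theorem apply_fOp_of_xTime_le (hf : ContinuousOn (fun t => β (σ t)) (Icc 0 1))
    (hφ : Qval β σ + 1 ≤ β (σ 1)) (h2 : β βv = 2) {t : ℝ} (ht : xTime β σ ≤ t) :
    β (fOp β βv σ t) = β (σ t) - 2 := by
  rw [fOp_of_xTime_le hf hφ ht, map_sub, h2]

theorem Qval_fOp (hf : ContinuousOn (fun t => β (σ t)) (Icc 0 1))
    (hI : IsIntegralFn (fun t => β (σ t))) (hφ : Qval β σ + 1 ≤ β (σ 1)) (h2 : β βv = 2) :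
    Qval β (fOp β βv σ) = Qval β σ - 1 := by
  obtain ⟨hp, -⟩ := pTime_mem hf
  obtain ⟨hpx, hx1, hfx⟩ := xTime_mem hf hφ
  refine IsLeast.csInf_eq ⟨⟨xTime β σ, ⟨hp.1.trans hpx.le, hx1⟩, ?_⟩, ?_⟩
  · dsimp only
    rw [apply_fOp_of_xTime_le hf hφ h2 le_rfl, hfx]
    ring
  rintro _ ⟨t, ht, rfl⟩
  dsimp only
  rcases le_or_gt t (pTime β σ) with htp | hpt
  · rw [fOp_of_le_pTime htp]
    linarith [Qval_le hf ht]
  rcases lt_or_ge t (xTime β σ) with htx | hxt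
  · rw [apply_fOp_of_mem_Icc hf h2 ⟨hpt.le, htx.le⟩]
    linarith [lt_Qval_add_one_of_lt_xTime hf hφ hpt htx]
  · rw [apply_fOp_of_xTime_le hf hφ h2 hxt]
    linarith [Qval_add_one_le_of_xTime_le hf hI hφ ⟨hxt, ht.2⟩]

/-- Just after `p` the reflected path lies below its value `Q` at `p`. -/
theorem not_isLocalMin_fOp_pTime (hf : ContinuousOn (fun t => β (σ t)) (Icc 0 1))
    (hφ : Qval β σ + 1 ≤ β (σ 1)) (h2 : β βv = 2) :
    ¬ IsLocalMin (fun t => β (fOp β βv σ t)) (pTime β σ) := by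
  intro hmin
  obtain ⟨hp, hfp⟩ := pTime_mem hf
  obtain ⟨hpx, hx1, -⟩ := xTime_mem hf hφ
  obtain ⟨s, hs, hps⟩ := ((hmin.filter_mono nhdsWithin_le_nhds).and
    (Ioo_mem_nhdsGT hpx)).exists
  have hs' : s ∈ Icc (0 : ℝ) 1 := ⟨hp.1.trans hps.1.le, hps.2.le.trans hx1⟩
  have := Qval_lt_of_pTime_lt hf hs' hps.1
  simp only [apply_fOp_of_mem_Icc hf h2 ⟨hps.1.le, hps.2.le⟩, fOp_of_le_pTime le_rfl, hfp] at hs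
  linarith

/-- On `(p, x)` the path is reflected, so a local minimum there would be a local maximum of
`β ∘ σ` strictly between the levels `Q` and `Q + 1`; descending from it towards `x` produces a
local minimum of `β ∘ σ` strictly between these integers. -/
theorem not_isLocalMin_fOp_of_mem_Ioo (hf : ContinuousOn (fun t => β (σ t)) (Icc 0 1))
    (hI : IsIntegralFn (fun t => β (σ t))) (hφ : Qval β σ + 1 ≤ β (σ 1)) (h2 : β βv = 2)
    {t : ℝ} (ht : t ∈ Ioo (pTime β σ) (xTime β σ)) :
    ¬ IsLocalMin (fun t => β (fOp β βv σ t)) t := by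
  intro hmin
  obtain ⟨hp, -⟩ := pTime_mem hf
  obtain ⟨-, hx1, hfx⟩ := xTime_mem hf hφ
  have hmax : IsLocalMax (fun t => β (σ t)) t := by
    filter_upwards [hmin, Ioo_mem_nhds ht.1 ht.2] with s hs hs'
    simp only [apply_fOp_of_mem_Icc hf h2 ⟨hs'.1.le, hs'.2.le⟩,
      apply_fOp_of_mem_Icc hf h2 ⟨ht.1.le, ht.2.le⟩] at hs
    linarith
  have hft := lt_Qval_add_one_of_lt_xTime hf hφ ht.1 ht.2
  obtain ⟨s, hs, hsmin, hst⟩ := exists_isLocalMin_of_isLocalMax ht.2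
    (hf.mono (Icc_subset_Icc (hp.1.trans ht.1.le) hx1)) hmax (hfx ▸ hft)
  have hs01 : s ∈ Ioo (0 : ℝ) 1 := ⟨hp.1.trans_lt (ht.1.trans hs.1), hs.2.trans_le hx1⟩
  obtain ⟨k, hk⟩ := exists_Qval_eq_intCast hf hI
  have hQs := Qval_lt_of_pTime_lt hf (Ioo_subset_Icc_self hs01) (ht.1.trans hs.1)
  rw [hk] at hQs hft
  linarith [hI.add_one_le_of_isLocalMin hs01 hsmin hQs]

theorem isIntegralFn_fOp (hf : ContinuousOn (fun t => β (σ t)) (Icc 0 1))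
    (hI : IsIntegralFn (fun t => β (σ t))) (hφ : Qval β σ + 1 ≤ β (σ 1)) (h2 : β βv = 2) :
    IsIntegralFn (fun t => β (fOp β βv σ t)) := by
  obtain ⟨hpx, -, hfx⟩ := xTime_mem hf hφ
  obtain ⟨k, hk⟩ := exists_Qval_eq_intCast hf hI
  refine ⟨?_, ?_, fun t ⟨ht, hmin⟩ => ?_⟩
  · simpa only [fOp_apply_zero] using hI.1
  · obtain ⟨m, hm⟩ := hI.2.1
    exact ⟨m - 2, by simp [fOp_apply_one hf hφ, h2, hm]⟩
  rcases lt_trichotomy t (pTime β σ) with htp | rfl | hpt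
  · have hσmin : IsLocalMin (fun s => β (σ s)) t := by
      filter_upwards [hmin, Iio_mem_nhds htp] with s hs hs'
      simpa only [fOp_of_le_pTime hs'.le, fOp_of_le_pTime htp.le] using hs
    simpa only [fOp_of_le_pTime htp.le] using hI.2.2 t ⟨ht, hσmin⟩
  · exact absurd hmin (not_isLocalMin_fOp_pTime hf hφ h2)
  rcases lt_trichotomy t (xTime β σ) with htx | rfl | hxt
  · exact absurd hmin (not_isLocalMin_fOp_of_mem_Ioo hf hI hφ h2 ⟨hpt, htx⟩)
  · exact ⟨k - 1, by simp [apply_fOp_of_xTime_le hf hφ h2 le_rfl, hfx, hk]; ring⟩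
  · have hσmin : IsLocalMin (fun s => β (σ s)) t := by
      filter_upwards [hmin, Ioi_mem_nhds hxt] with s hs hs'
      simp only [apply_fOp_of_xTime_le hf hφ h2 hs'.le,
        apply_fOp_of_xTime_le hf hφ h2 hxt.le] at hs
      linarith
    obtain ⟨m, hm⟩ := hI.2.2 t ⟨ht, hσmin⟩
    exact ⟨m - 2, by simp [apply_fOp_of_xTime_le hf hφ h2 hxt.le, hm]⟩

theorem fOp_iterate_spec (hC : WeaklyContinuousOn σ (Icc 0 1))
    (hI : IsIntegralFn (fun t => β (σ t))) (h2 : β βv = 2) {j : ℕ}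
    (hj : (j : ℝ) ≤ phiVal β σ) :
    WeaklyContinuousOn ((fOp β βv)^[j] σ) (Icc 0 1) ∧
      IsIntegralFn (fun t => β ((fOp β βv)^[j] σ t)) ∧
      (fOp β βv)^[j] σ 1 = σ 1 - (j : ℝ) • βv ∧
      Qval β ((fOp β βv)^[j] σ) = Qval β σ - j := by
  induction j with
  | zero => simpa using ⟨hC, hI⟩
  | succ j ih =>
    rw [phiVal, Nat.cast_succ] at hj
    obtain ⟨hCj, hIj, hj1, hQj⟩ := ih (by rw [phiVal]; linarith)
    have hφj : Qval β ((fOp β βv)^[j] σ) + 1 ≤ β ((fOp β βv)^[j] σ 1) := by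
      rw [hQj, hj1, map_sub, map_smul, h2, smul_eq_mul]
      linarith
    rw [Function.iterate_succ_apply']
    refine ⟨fun γ => continuousOn_fOp (hCj β) (hCj γ) hφj, isIntegralFn_fOp (hCj β) hIj hφj h2,
      ?_, ?_⟩
    · rw [fOp_apply_one (hCj β) hφj, hj1, Nat.cast_succ, add_smul, one_smul, sub_sub]
    · rw [Qval_fOp (hCj β) hIj hφj h2, hQj, Nat.cast_succ, sub_sub]

theorem exists_phiVal_eq_natCast (hf : ContinuousOn (fun t => β (σ t)) (Icc 0 1))
    (hI : IsIntegralFn (fun t => β (σ t))) : ∃ n : ℕ, phiVal β σ = n := by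
  obtain ⟨m, hm : β (σ 1) = m⟩ := hI.2.1
  obtain ⟨k, hk⟩ := exists_Qval_eq_intCast hf hI
  have hkm : k ≤ m := by
    have := Qval_le hf (right_mem_Icc.2 zero_le_one)
    rw [hk, hm] at this
    exact_mod_cast this
  refine ⟨(m - k).toNat, ?_⟩
  rw [phiVal, hm, hk, ← Int.cast_sub, ← Int.cast_natCast, Int.toNat_of_nonneg (by omega)]

theorem fMax_eq_iterate {n : ℕ} (hn : phiVal β σ = n) : fMax β βv σ = (fOp β βv)^[n] σ := by
  rw [fMax, hn, Nat.floor_natCast]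

theorem weaklyContinuousOn_fMax (hC : WeaklyContinuousOn σ (Icc 0 1))
    (hI : IsIntegralFn (fun t => β (σ t))) (h2 : β βv = 2) :
    WeaklyContinuousOn (fMax β βv σ) (Icc 0 1) := by
  obtain ⟨n, hn⟩ := exists_phiVal_eq_natCast (hC β) hI
  rw [fMax_eq_iterate hn]
  exact (fOp_iterate_spec hC hI h2 hn.ge).1

theorem fMax_apply_one (hC : WeaklyContinuousOn σ (Icc 0 1))
    (hI : IsIntegralFn (fun t => β (σ t))) (h2 : β βv = 2) :
    fMax β βv σ 1 = σ 1 - phiVal β σ • βv := by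
  obtain ⟨n, hn⟩ := exists_phiVal_eq_natCast (hC β) hI
  rw [fMax_eq_iterate hn, hn]
  exact (fOp_iterate_spec hC hI h2 hn.ge).2.2.1

theorem fMax_apply_zero : fMax β βv σ 0 = σ 0 := by
  rw [fMax]
  induction ⌊phiVal β σ⌋₊ with
  | zero => rfl
  | succ n ih => rw [Function.iterate_succ_apply', fOp_apply_zero, ih]

end Lowering

section Words

variable (α : I → (V →ₗ[ℝ] ℝ)) (αv : I → V)

theorem isLinearMap_si (j : I) : IsLinearMap ℝ (si α αv j) where
  map_add u v := by simp only [si, map_add, add_smul]; abel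
  map_smul r u := by simp only [si, map_smul, smul_eq_mul, mul_smul, smul_sub]

theorem isLinearMap_wProd (c : List I) : IsLinearMap ℝ (wProd α αv c) := by
  induction c with
  | nil => exact ⟨fun _ _ => rfl, fun _ _ => rfl⟩
  | cons j c ih =>
    exact ((IsLinearMap.mk' _ (isLinearMap_si α αv j)).comp (IsLinearMap.mk' _ ih)).isLinear

theorem wProd_append (c d : List I) : wProd α αv (c ++ d) = wProd α αv c ∘ wProd α αv d := by
  induction c with
  | nil => rfl
  | cons j c ih => exact congrArg (si α αv j ∘ ·) ih

theorem wProd_singleton (j : I) : wProd α αv [j] = si α αv j := rfl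

theorem si_sub_smul {i : I} (h2 : α i (αv i) = 2) (v : V) (q : ℝ) :
    si α αv i (v - (α i v - q) • αv i) = v - q • αv i := by
  simp only [si, map_sub, map_smul, smul_eq_mul, h2]
  module

theorem thetaPath_append_singleton (c : List I) (j : I) (π : ℝ → V) :
    ThetaPath α αv (c ++ [j]) π = fMax (α j) (αv j) (ThetaPath α αv c π) := by
  rw [ThetaPath, List.foldl_append]
  rfl

theorem thetaPath_apply_zero (c : List I) (π : ℝ → V) : ThetaPath α αv c π 0 = π 0 := by
  induction c generalizing π with
  | nil => rfl
  | cons j c ih => exact (ih _).trans fMax_apply_zero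

theorem ThetaIntegral.of_append_singleton {c : List I} {j : I} {π : ℝ → V}
    (h : ThetaIntegral α αv (c ++ [j]) π) :
    ThetaIntegral α αv c π ∧ IsIntegralFn (fun t => α j (ThetaPath α αv c π t)) := by
  refine ⟨fun k => ?_, ?_⟩
  · simpa [List.getElem_append_left, List.take_append_of_le_length k.2.le] using
      h ⟨k, by simp⟩
  · simpa using h ⟨c.length, by simp⟩

theorem weaklyContinuousOn_thetaPath (h2 : ∀ j, α j (αv j) = 2) {π : ℝ → V}
    (hπ : WeaklyContinuousOn π (Icc 0 1)) {c : List I} (hint : ThetaIntegral α αv c π) :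
    WeaklyContinuousOn (ThetaPath α αv c π) (Icc 0 1) := by
  induction c using List.reverseRecOn with
  | nil => exact hπ
  | append_singleton c j ih =>
    obtain ⟨hc, hj⟩ := hint.of_append_singleton
    rw [thetaPath_append_singleton]
    exact weaklyContinuousOn_fMax (ih hc) hj (h2 j)

theorem upsPath'_apply_zero {π : ℝ → V} (hπ0 : π 0 = 0) (c : List I) :
    UpsPath' α αv c π 0 = π 1 - wProd α αv c (ThetaPath α αv c π 1) := by
  rw [UpsPath', UpsPath, UpsPath, thetaPath_apply_zero, hπ0, (isLinearMap_wProd α αv c).map_zero,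
    zero_add]

end Words

theorem upsPath'_consecutive_difference_general {V : Type*} [AddCommGroup V] [Module ℝ V]
    {I : Type*}
    (α : I → (V →ₗ[ℝ] ℝ)) (αv : I → V) (hrs : IsRootGenSystem α αv)
    (w : List I) (i : I)
    (π : ℝ → V) (hπ : IsPath π) (hint : ThetaIntegral α αv (w ++ [i]) π) :
    UpsPath' α αv w π 0 - UpsPath' α αv (w ++ [i]) π 0
      = (-(Qval (α i) (ThetaPath α αv w π))) • wProd α αv w (αv i) := by
  have h2 : ∀ j, α j (αv j) = 2 := hrs.2.2.1
  obtain ⟨hintw, hinti⟩ := hint.of_append_singleton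
  have hC := weaklyContinuousOn_thetaPath α αv h2 hπ.2.weaklyContinuousOn hintw
  have hw := isLinearMap_wProd α αv w
  rw [upsPath'_apply_zero α αv hπ.1, upsPath'_apply_zero α αv hπ.1, thetaPath_append_singleton,
    fMax_apply_one hC hinti (h2 i), wProd_append, Function.comp_apply, phiVal, wProd_singleton,
    si_sub_smul α αv (h2 i), hw.map_sub, hw.map_smul]
  module

/-- `Υ'_{w}(π)(0) − Υ'_{ws_{i_n}}(π)(0) = ε_{α_{i_n}}(Θ_{n−1}) β_n^∨`. -/
theorem upsPath'_consecutive_difference {V : Type*} [AddCommGroup V] [Module ℝ V]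
    [FiniteDimensional ℝ V] {I : Type*} [Fintype I]
    (α : I → (V →ₗ[ℝ] ℝ)) (αv : I → V) (hrs : IsRootGenSystem α αv)
    (w : List I) (i : I) (hred : IsReducedWord α αv (w ++ [i]))
    (π : ℝ → V) (hπ : IsPath π) (hint : ThetaIntegral α αv (w ++ [i]) π) :
    UpsPath' α αv w π 0 - UpsPath' α αv (w ++ [i]) π 0
      = (-(Qval (α i) (ThetaPath α αv w π))) • wProd α αv w (αv i) :=
  upsPath'_consecutive_difference_general α αv hrs w i π hπ hint

end MVPaper
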